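/- The equation a!/(a−3)! + b!/(b−3)! = c!/(c−3)! has infinitely many solutions in integers a, b, c with a ≥ 3, b ≥ 3, c ≥ 3. -/
import Mathlib

/-- A Pell-type sequence of pairs `(d, b)` satisfying the quadratic invariant
`7d² + 3d = 3b² + 3db - 6b + 4`, which makes `(2d+1, b, b+d)` a solution of
`a(a-1)(a-2) + b(b-1)(b-2) = c(c-1)(c-2)`. -/
def pellSeq : ℕ → ℤ × ℤ
  | 0 => (23491, 26012)
  | n + 1 =>
      (15931 * (pellSeq n).1 + 7560 * (pellSeq n).2 - 7560,
       17640 * (pellSeq n).1 + 8371 * (pellSeq n).2 - 8370)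

lemma pellSeq_props : ∀ n : ℕ, 3 ≤ (pellSeq n).1 ∧ 3 ≤ (pellSeq n).2 ∧
    7 * (pellSeq n).1 ^ 2 + 3 * (pellSeq n).1 =
      3 * (pellSeq n).2 ^ 2 + 3 * (pellSeq n).1 * (pellSeq n).2 - 6 * (pellSeq n).2 + 4 := by
  intro n
  induction n with
  | zero => refine ⟨by norm_num [pellSeq], by norm_num [pellSeq], by norm_num [pellSeq]⟩
  | succ n ih =>
    obtain ⟨hd, hb, hinv⟩ := ih
    refine ⟨?_, ?_, ?_⟩
    · show 3 ≤ 15931 * (pellSeq n).1 + 7560 * (pellSeq n).2 - 7560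
      nlinarith
    · show 3 ≤ 17640 * (pellSeq n).1 + 8371 * (pellSeq n).2 - 8370
      nlinarith
    · show 7 * (15931 * (pellSeq n).1 + 7560 * (pellSeq n).2 - 7560) ^ 2 +
          3 * (15931 * (pellSeq n).1 + 7560 * (pellSeq n).2 - 7560) =
          3 * (17640 * (pellSeq n).1 + 8371 * (pellSeq n).2 - 8370) ^ 2 +
          3 * (15931 * (pellSeq n).1 + 7560 * (pellSeq n).2 - 7560) *
            (17640 * (pellSeq n).1 + 8371 * (pellSeq n).2 - 8370) -
          6 * (17640 * (pellSeq n).1 + 8371 * (pellSeq n).2 - 8370) + 4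
      linear_combination hinv

lemma pellSeq_fst_strictMono : StrictMono fun n => (pellSeq n).1 := by
  have h : ∀ n : ℕ, (pellSeq n).1 < (pellSeq (n + 1)).1 := by
    intro n
    obtain ⟨hd, hb, _⟩ := pellSeq_props n
    show (pellSeq n).1 < 15931 * (pellSeq n).1 + 7560 * (pellSeq n).2 - 7560
    nlinarith
  exact strictMono_nat_of_lt_succ h

/-- The equation `a!/(a−3)! + b!/(b−3)! = c!/(c−3)!`, i.e.
`a(a−1)(a−2) + b(b−1)(b−2) = c(c−1)(c−2)`, has infinitely many solutions
in integers `a, b, c ≥ 3`. -/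
theorem stmt_1 :
    {p : ℤ × ℤ × ℤ | 3 ≤ p.1 ∧ 3 ≤ p.2.1 ∧ 3 ≤ p.2.2 ∧
      p.1 * (p.1 - 1) * (p.1 - 2) + p.2.1 * (p.2.1 - 1) * (p.2.1 - 2) =
        p.2.2 * (p.2.2 - 1) * (p.2.2 - 2)}.Infinite := by
  apply Set.infinite_of_injective_forall_mem
    (f := fun n : ℕ => (2 * (pellSeq n).1 + 1, (pellSeq n).2, (pellSeq n).2 + (pellSeq n).1))
  · intro m n hmn
    have h1 : 2 * (pellSeq m).1 + 1 = 2 * (pellSeq n).1 + 1 := congrArg Prod.fst hmn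
    have h2 : (pellSeq m).1 = (pellSeq n).1 := by omega
    exact pellSeq_fst_strictMono.injective h2
  · intro n
    obtain ⟨hd, hb, hinv⟩ := pellSeq_props n
    refine ⟨by simp; omega, by simpa using hb, by simp; omega, ?_⟩
    simp only
    linear_combination (pellSeq n).1 * hinv
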